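/- arXiv:2201.11738 — 2 statements merged into one kernel-verified Lean document; each statement's English description precedes it below -/
import Mathlib

section
/- For any monoidal category C, there exists a strict monoidal category D and a monoidal equivalence between C and D (Mac Lane's strictness theorem). -/
open CategoryTheory MonoidalCategory

universe v u

/-- A monoidal category is strict when its associators and unitors are identities
(modulo the induced equalities of objects). -/
def IsStrictMonoidal (D : Type u) [Category.{v} D] [MonoidalCategory D] : Prop :=
  ∃ (ha : ∀ X Y Z : D, (X ⊗ Y) ⊗ Z = X ⊗ (Y ⊗ Z))
    (hl : ∀ X : D, 𝟙_ D ⊗ X = X) (hr : ∀ X : D, X ⊗ 𝟙_ D = X),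
    (∀ X Y Z : D, (α_ X Y Z).hom = eqToHom (ha X Y Z)) ∧
    (∀ X : D, (λ_ X).hom = eqToHom (hl X)) ∧
    (∀ X : D, (ρ_ X).hom = eqToHom (hr X))

/-- A monoidal equivalence between `C` and `D`: an equivalence whose two functors are
monoidal, compatibly with the unit and counit isomorphisms. -/
structure MonoidalEquivalenceWitness (C : Type*) (D : Type*)
    [Category C] [MonoidalCategory C] [Category D] [MonoidalCategory D] where
  e : C ≌ D
  functorMonoidal : e.functor.Monoidal
  inverseMonoidal : e.inverse.Monoidal
  isMonoidal : letI := functorMonoidal; letI := inverseMonoidal; e.IsMonoidal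

namespace MacLane
variable {C : Type u} [Category.{v} C] [MonoidalCategory C]

@[reducible] def tObj : List C → C
  | [] => 𝟙_ C
  | X :: l => X ⊗ tObj l

def muL : ∀ (L M : List C), tObj L ⊗ tObj M ≅ tObj (L ++ M)
  | [], M => λ_ (tObj M)
  | X :: L, M => α_ X (tObj L) (tObj M) ≪≫ whiskerLeftIso X (muL L M)

lemma whiskerLeft_eqToHom (X : C) {A B : C} (h : A = B) :
    X ◁ eqToHom h = eqToHom (congrArg (fun Z => X ⊗ Z) h) := by subst h; simp

lemma muL_assoc : ∀ (L M N : List C),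
    ((muL L M).hom ▷ tObj N) ≫ (muL (L ++ M) N).hom ≫
        eqToHom (congrArg tObj (List.append_assoc L M N)) =
      (α_ (tObj L) (tObj M) (tObj N)).hom ≫ (tObj L ◁ (muL M N).hom) ≫ (muL L (M ++ N)).hom
  | [], M, N => by
      simp only [muL, tObj, List.nil_append, eqToHom_refl, Category.comp_id]
      rw [MonoidalCategory.leftUnitor_naturality, leftUnitor_tensor_hom_assoc]
      simp
  | X :: L, M, N => by
      have ih := muL_assoc L M N
      simp only [muL, Iso.trans_hom, whiskerLeftIso_hom, List.cons_append,
        comp_whiskerRight, Category.assoc]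
      rw [show (eqToHom (congrArg tObj (List.append_assoc (X :: L) M N)) :
            tObj (X :: (L ++ M ++ N)) ⟶ tObj (X :: (L ++ (M ++ N)))) =
          X ◁ eqToHom (congrArg tObj (List.append_assoc L M N)) from
        (whiskerLeft_eqToHom X _).symm]
      rw [associator_naturality_middle_assoc (f := (muL L M).hom)]
      rw [← MonoidalCategory.whiskerLeft_comp, ← MonoidalCategory.whiskerLeft_comp]
      dsimp only [List.append_eq]
      rw [ih]
      simp only [MonoidalCategory.whiskerLeft_comp, pentagon_assoc,
        associator_naturality_right_assoc, whisker_assoc, Category.assoc]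

lemma muL_nil_right : ∀ L : List C,
    (muL L []).hom ≫ eqToHom (congrArg tObj (List.append_nil L)) = (ρ_ (tObj L)).hom
  | [] => by simp [muL, tObj, unitors_equal]
  | X :: L => by
      have ih := muL_nil_right L
      simp only [muL, tObj, Iso.trans_hom, whiskerLeftIso_hom, Category.assoc]
      rw [show (eqToHom (congrArg tObj (List.append_nil (X :: L))) :
            tObj (X :: (L ++ [])) ⟶ tObj (X :: L)) =
          X ◁ eqToHom (congrArg tObj (List.append_nil L)) from
        (whiskerLeft_eqToHom X _).symm]
      rw [← MonoidalCategory.whiskerLeft_comp, ih, ← rightUnitor_tensor_hom]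

end MacLane

namespace MacLane2
open MacLane
variable (C : Type u) [Category.{v} C] [MonoidalCategory C]

/-- Objects of the strictification: lists of objects of `C`, lifted to the right universe. -/
def DObj : Type (max u v) := ULift.{v} (List C)

/-- The evaluation of a list as an object of `C`. -/
def ev : DObj C → C := fun l => tObj l.down

/-- The strictification as an induced category. -/
abbrev DCat : Type (max u v) := InducedCategory C (ev C)

variable {C} in
/-- Whisker-left on evaluated lists. -/
def wl (L : List C) {Y₁ Y₂ : List C} (f : tObj Y₁ ⟶ tObj Y₂) :
    tObj (L ++ Y₁) ⟶ tObj (L ++ Y₂) :=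
  (muL L Y₁).inv ≫ (tObj L ◁ f) ≫ (muL L Y₂).hom

variable {C} in
/-- Whisker-right on evaluated lists. -/
def wr {X₁ X₂ : List C} (f : tObj X₁ ⟶ tObj X₂) (N : List C) :
    tObj (X₁ ++ N) ⟶ tObj (X₂ ++ N) :=
  (muL X₁ N).inv ≫ (f ▷ tObj N) ≫ (muL X₂ N).hom

variable {C} in
/-- Tensor product of morphisms on evaluated lists. -/
def th {X₁ Y₁ X₂ Y₂ : List C} (f : tObj X₁ ⟶ tObj Y₁) (g : tObj X₂ ⟶ tObj Y₂) :
    tObj (X₁ ++ X₂) ⟶ tObj (Y₁ ++ Y₂) :=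
  (muL X₁ X₂).inv ≫ (f ⊗ₘ g) ≫ (muL Y₁ Y₂).hom

instance instStruct : MonoidalCategoryStruct (DCat C) where
  tensorObj L M := ⟨L.down ++ M.down⟩
  tensorUnit := ⟨[]⟩
  whiskerLeft L Y₁ Y₂ f := InducedCategory.homMk (wl L.down f.hom)
  whiskerRight {X₁ X₂} f N := InducedCategory.homMk (wr f.hom N.down)
  tensorHom {X₁ Y₁ X₂ Y₂} f g := InducedCategory.homMk (th f.hom g.hom)
  associator L M N := eqToIso (congrArg ULift.up (List.append_assoc L.down M.down N.down))
  leftUnitor L := eqToIso rfl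
  rightUnitor L := eqToIso (congrArg ULift.up (List.append_nil L.down))

variable {C} in
lemma eqToHom_down {X Y : DCat C} (h : X = Y) :
    (inducedFunctor (ev C)).map (eqToHom h) = eqToHom (congrArg (ev C) h) :=
  eqToHom_map _ h

/-- The inducing data for the forgetful functor from the strictification. -/
def data : Monoidal.InducingFunctorData (inducedFunctor (ev C)) where
  μIso L M := muL L.down M.down
  whiskerLeft_eq := by intros; rfl
  whiskerRight_eq := by intros; rfl
  tensorHom_eq := by intros; rfl
  εIso := Iso.refl _
  associator_eq L M N := by
    have key := muL_assoc L.down M.down N.down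
    have e0 : ((L ⊗ M) ⊗ N : DCat C) = L ⊗ M ⊗ N :=
      congrArg ULift.up (List.append_assoc L.down M.down N.down)
    have e1 : (inducedFunctor (ev C)).map (α_ L M N).hom =
        eqToHom (congrArg tObj (List.append_assoc L.down M.down N.down)) :=
      eqToHom_map (inducedFunctor (ev C)) e0
    rw [e1]
    change eqToHom _ =
      ((muL (L.down ++ M.down) N.down).inv ≫
          MonoidalCategoryStruct.tensorHom (muL L.down M.down).inv (𝟙 (tObj N.down))) ≫
        ((α_ (tObj L.down) (tObj M.down) (tObj N.down)).hom ≫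
          (MonoidalCategoryStruct.tensorHom (𝟙 (tObj L.down)) (muL M.down N.down).hom ≫
            (muL L.down (M.down ++ N.down)).hom))
    simp only [tensorHom_id, id_tensorHom, Category.assoc]
    rw [← key]
    simp
  leftUnitor_eq L := by
    change 𝟙 (tObj L.down) =
      ((λ_ (tObj L.down)).inv ≫
        MonoidalCategoryStruct.tensorHom (𝟙 (𝟙_ C)) (𝟙 (tObj L.down))) ≫ (λ_ (tObj L.down)).hom
    simp
  rightUnitor_eq L := by
    have key := muL_nil_right L.down
    have e0 : (L ⊗ 𝟙_ (DCat C) : DCat C) = L := congrArg ULift.up (List.append_nil L.down)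
    have e1 : (inducedFunctor (ev C)).map (ρ_ L).hom =
        eqToHom (congrArg tObj (List.append_nil L.down)) :=
      eqToHom_map (inducedFunctor (ev C)) e0
    rw [e1]
    change eqToHom _ =
      ((muL L.down []).inv ≫
        MonoidalCategoryStruct.tensorHom (𝟙 (tObj L.down)) (𝟙 (tObj ([] : List C)))) ≫
        (ρ_ (tObj L.down)).hom
    rw [← key]
    simp

instance : MonoidalCategory (DCat C) := Monoidal.induced _ (data C)

noncomputable instance : (inducedFunctor (ev C)).Monoidal :=
  Monoidal.fromInducedMonoidal _ (data C)

instance : (inducedFunctor (ev C)).EssSurj :=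
  ⟨fun X => ⟨⟨[X]⟩, ⟨ρ_ X⟩⟩⟩

instance : (inducedFunctor (ev C)).IsEquivalence where

lemma strict : IsStrictMonoidal (DCat C) := by
  refine ⟨fun X Y Z => congrArg ULift.up (List.append_assoc X.down Y.down Z.down),
    fun X => rfl, fun X => congrArg ULift.up (List.append_nil X.down),
    fun X Y Z => rfl, fun X => rfl, fun X => rfl⟩

noncomputable def witness : MonoidalEquivalenceWitness C (DCat C) := by
  let e' := (inducedFunctor (ev C)).asEquivalence
  letI i1 : e'.functor.Monoidal :=
    (inferInstance : Functor.Monoidal (inducedFunctor (ev C)))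
  letI i2 : e'.inverse.Monoidal := e'.inverseMonoidal
  haveI i3 : e'.IsMonoidal := ⟨rfl, fun _ _ => rfl⟩
  exact ⟨e'.symm, i2, i1, inferInstance⟩

end MacLane2

/-- Mac Lane's strictness theorem: every monoidal category is monoidally equivalent to a
strict monoidal category. -/
theorem maclane_strictness (C : Type u) [Category.{v} C] [MonoidalCategory C] :
    ∃ (D : Type (max u v)) (catD : Category.{v} D) (monD : MonoidalCategory D),
      @IsStrictMonoidal D catD monD ∧
        Nonempty (@MonoidalEquivalenceWitness C D _ _ catD monD) :=
  ⟨MacLane2.DCat C, inferInstance, inferInstance, MacLane2.strict C, ⟨MacLane2.witness C⟩⟩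
end

section
/- In the free monoidal category on one generator, for every object A of size n there is an isomorphism pack(A) : Wⁿ → A, where Wⁿ denotes a fixed n-fold tensoring of the generator (e.g., left-nested), defined inductively on the structure of A. -/
open CategoryTheory MonoidalCategory

/-- Size of an object of the free monoidal category on one generator. -/
def objSize : FreeMonoidalCategory PUnit → ℕ
  | FreeMonoidalCategory.unit => 0
  | FreeMonoidalCategory.of _ => 1
  | FreeMonoidalCategory.tensor A B => objSize A + objSize B

/-- The left-nested `n`-fold tensor power of the generator: `W⁰ = I`, `W^{n+1} = Wⁿ ⊗ W`. -/
def Wpow : ℕ → FreeMonoidalCategory PUnit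
  | 0 => 𝟙_ (FreeMonoidalCategory PUnit)
  | n + 1 => Wpow n ⊗ FreeMonoidalCategory.of PUnit.unit

/-- `W^{m+n} ≅ Wᵐ ⊗ Wⁿ`. -/
def WpowAdd (m : ℕ) : (n : ℕ) → (Wpow (m + n) ≅ Wpow m ⊗ Wpow n)
  | 0 => (ρ_ (Wpow m)).symm
  | n + 1 => (whiskerRightIso (WpowAdd m n) _) ≪≫ (α_ _ _ _)

/-- For every object `A` of size `n` there is an isomorphism `pack(A) : Wⁿ ≅ A`. -/
theorem pack_exists (A : FreeMonoidalCategory PUnit) :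
    Nonempty (Wpow (objSize A) ≅ A) := by
  induction A with
  | unit => exact ⟨Iso.refl _⟩
  | of x => exact ⟨λ_ _⟩
  | tensor A B ihA ihB =>
    obtain ⟨a⟩ := ihA; obtain ⟨b⟩ := ihB
    exact ⟨WpowAdd _ _ ≪≫ (a ⊗ᵢ b)⟩
end
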